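/- For fixed (t,x) ∈ ℝ², as a → 1/2 from below, the Akhmediev breather B_A(t,x; a) converges pointwise to the Peregrine breather B_P(t,x) = e^{it}(1 - 4(1+2it)/(1+4t²+2x²)). -/

import Mathlib

open Complex

/-- Partial derivative in the first (time) variable. -/
noncomputable def pdt (u : ℝ → ℝ → ℂ) (t x : ℝ) : ℂ := deriv (fun s => u s x) t

/-- Partial derivative in the second (space) variable. -/
noncomputable def pdx (u : ℝ → ℝ → ℂ) (t x : ℝ) : ℂ := deriv (fun y => u t y) x

/-- `u` solves the cubic focusing NLS `i u_t + u_xx + |u|² u = 0`. -/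
def IsNLSSolution (u : ℝ → ℝ → ℂ) : Prop :=
  ∀ t x : ℝ, Complex.I * pdt u t x + pdx (pdx u) t x
    + (((‖u t x‖ : ℝ) : ℂ))^2 * u t x = 0

/-- The Peregrine breather. -/
noncomputable def BP (t x : ℝ) : ℂ :=
  Complex.exp (Complex.I * t) *
    (1 - 4 * (1 + 2 * Complex.I * t) / (1 + 4 * (t:ℂ)^2 + 2 * (x:ℂ)^2))

/-- Parameter `α` of the Akhmediev breather. -/
noncomputable def Aalpha (a : ℝ) : ℝ := Real.sqrt (2 * (1 - 2 * a))

/-- Parameter `β` of the Akhmediev breather. -/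
noncomputable def Abeta (a : ℝ) : ℝ := Real.sqrt (8 * a * (1 - 2 * a))

/-- The Akhmediev breather with parameter `a ∈ (0, 1/2)`. -/
noncomputable def BA (a : ℝ) (t x : ℝ) : ℂ :=
  Complex.exp (Complex.I * t) *
    (1 + (((Aalpha a : ℂ))^2 * Real.cosh (Abeta a * t)
        + Complex.I * (Abeta a) * Real.sinh (Abeta a * t)) /
      ((Real.sqrt (2 * a) : ℂ) * Real.cos (Aalpha a * x) - (Real.cosh (Abeta a * t) : ℂ)))

/-!
As `a → 1/2⁻` both the numerator and the denominator of the fraction in the Akhmediev breather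
vanish to order `α² = 2(1 - 2a)`. Dividing both by `α²`, with `β² = 4aα²`,
`1 - cos y = (y²/2) sinc²(y/2)` and `cosh y - 1 = (y²/2) (sinh(y/2)/(y/2))²`, turns them into
functions of `a` that are continuous at `1/2`, with values `1 + 2it` and `-(1 + 4t² + 2x²)/4`
there; their quotient gives the Peregrine breather.
-/

namespace Real

theorem sin_eq_mul_sinc (y : ℝ) : sin y = y * sinc y := by
  simpa [sinc_eq_dslope] using (sub_smul_dslope sin 0 y).symm

theorem sinh_eq_mul_dslope (y : ℝ) : sinh y = y * dslope sinh 0 y := by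
  simpa using (sub_smul_dslope sinh 0 y).symm

theorem continuous_dslope_sinh : Continuous (dslope sinh 0) := by
  refine continuous_iff_continuousAt.2 fun y => ?_
  rcases eq_or_ne y 0 with rfl | hy
  · exact continuousAt_dslope_same.2 (differentiable_sinh 0)
  · exact (continuousAt_dslope_of_ne hy).2 continuous_sinh.continuousAt

theorem one_sub_cos_eq_mul_sinc_sq (y : ℝ) : 1 - cos y = y ^ 2 / 2 * sinc (y / 2) ^ 2 := by
  have hcos := cos_two_mul' (y / 2)
  have hpyth := sin_sq_add_cos_sq (y / 2)
  rw [mul_div_cancel₀ y two_ne_zero] at hcos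
  rw [hcos]
  rw [sin_eq_mul_sinc (y / 2)] at hpyth ⊢
  linear_combination -hpyth

theorem cosh_sub_one_eq_mul_dslope_sq (y : ℝ) :
    cosh y - 1 = y ^ 2 / 2 * dslope sinh 0 (y / 2) ^ 2 := by
  have hcosh := cosh_two_mul (y / 2)
  have hpyth := cosh_sq (y / 2)
  rw [mul_div_cancel₀ y two_ne_zero] at hcosh
  rw [hcosh, hpyth, sinh_eq_mul_dslope (y / 2)]
  ring

end Real

open Real

section Parameters

variable {a : ℝ}

theorem Aalpha_sq (ha : a ≤ 1 / 2) : Aalpha a ^ 2 = 2 * (1 - 2 * a) :=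
  sq_sqrt (by linarith)

theorem Abeta_sq (ha₀ : 0 ≤ a) (ha : a ≤ 1 / 2) : Abeta a ^ 2 = 4 * a * Aalpha a ^ 2 := by
  rw [Abeta, sq_sqrt (by nlinarith), Aalpha_sq ha]
  ring

theorem sqrt_two_mul_sub_one (ha₀ : 0 ≤ a) (ha : a ≤ 1 / 2) :
    √(2 * a) - 1 = -(Aalpha a ^ 2 / (2 * (√(2 * a) + 1))) := by
  have hsq : √(2 * a) ^ 2 = 2 * a := sq_sqrt (by linarith)
  rw [Aalpha_sq ha, eq_neg_iff_add_eq_zero, add_div' _ _ _ (by positivity), div_eq_zero_iff]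
  left
  linear_combination 2 * hsq

theorem continuous_Aalpha : Continuous Aalpha := by
  unfold Aalpha; fun_prop

theorem continuous_Abeta : Continuous Abeta := by
  unfold Abeta; fun_prop

theorem Aalpha_half : Aalpha (1 / 2) = 0 := by norm_num [Aalpha]

theorem Abeta_half : Abeta (1 / 2) = 0 := by norm_num [Abeta]

end Parameters

/-! The numerator and the denominator of the fraction in `BA a t x`, each divided by `α²`. -/
noncomputable def BAnum (t a : ℝ) : ℂ :=
  (Real.cosh (Abeta a * t) : ℂ) + I * ((4 * a * t * dslope Real.sinh 0 (Abeta a * t) : ℝ) : ℂ)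

noncomputable def BAden (t x a : ℝ) : ℝ :=
  -(√(2 * a) * (x ^ 2 / 2) * sinc (Aalpha a * x / 2) ^ 2) - 1 / (2 * (√(2 * a) + 1))
    - 2 * a * t ^ 2 * dslope Real.sinh 0 (Abeta a * t / 2) ^ 2

section Rescaling

variable {a : ℝ} (t x : ℝ)

theorem BA_numerator_eq (ha₀ : 0 ≤ a) (ha : a ≤ 1 / 2) :
    (Aalpha a : ℂ) ^ 2 * Real.cosh (Abeta a * t) + I * Abeta a * Real.sinh (Abeta a * t)
      = (Aalpha a : ℂ) ^ 2 * BAnum t a := by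
  have hβ : (Abeta a : ℂ) ^ 2 = 4 * a * (Aalpha a : ℂ) ^ 2 := by
    exact_mod_cast Abeta_sq ha₀ ha
  rw [Real.sinh_eq_mul_dslope, BAnum]
  push_cast
  linear_combination (I * t * ((dslope Real.sinh 0 (Abeta a * t) : ℝ) : ℂ)) * hβ

theorem BA_denominator_eq (ha₀ : 0 ≤ a) (ha : a ≤ 1 / 2) :
    √(2 * a) * Real.cos (Aalpha a * x) - Real.cosh (Abeta a * t) = Aalpha a ^ 2 * BAden t x a := by
  have hsplit : √(2 * a) * Real.cos (Aalpha a * x) - Real.cosh (Abeta a * t)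
      = -(√(2 * a) * (1 - Real.cos (Aalpha a * x))) + (√(2 * a) - 1)
        - (Real.cosh (Abeta a * t) - 1) := by ring
  rw [hsplit, one_sub_cos_eq_mul_sinc_sq, sqrt_two_mul_sub_one ha₀ ha,
    cosh_sub_one_eq_mul_dslope_sq, mul_pow (Abeta a), Abeta_sq ha₀ ha, BAden]
  ring

theorem BA_eq (ha₀ : 0 ≤ a) (ha : a < 1 / 2) :
    BA a t x = Complex.exp (I * t) * (1 + BAnum t a / BAden t x a) := by
  have hα : (Aalpha a : ℂ) ^ 2 ≠ 0 := by
    rw [← ofReal_pow, ofReal_ne_zero, Aalpha_sq ha.le]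
    linarith
  have hden : (√(2 * a) : ℂ) * Real.cos (Aalpha a * x) - Real.cosh (Abeta a * t)
      = (Aalpha a : ℂ) ^ 2 * BAden t x a := by
    exact_mod_cast congrArg ofReal (BA_denominator_eq t x ha₀ ha.le)
  rw [BA, BA_numerator_eq t ha₀ ha.le, hden, mul_div_mul_left _ _ hα]

end Rescaling

theorem continuous_BAnum (t : ℝ) : Continuous (BAnum t) := by
  have hsinh := continuous_dslope_sinh
  have hβ := continuous_Abeta
  unfold BAnum
  fun_prop

theorem continuous_BAden (t x : ℝ) : Continuous (BAden t x) := by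
  have hsinh := continuous_dslope_sinh
  have hα := continuous_Aalpha
  have hβ := continuous_Abeta
  have hinv : Continuous fun a : ℝ => 1 / (2 * (√(2 * a) + 1)) :=
    continuous_const.div (by fun_prop) fun a => by positivity
  unfold BAden
  fun_prop

theorem BAnum_half (t : ℝ) : BAnum t (1 / 2) = 1 + 2 * I * t := by
  rw [BAnum, Abeta_half]
  simp only [zero_mul, dslope_same, Real.deriv_sinh, Real.cosh_zero]
  push_cast
  ring

theorem BAden_half (t x : ℝ) : BAden t x (1 / 2) = -(1 + 4 * t ^ 2 + 2 * x ^ 2) / 4 := by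
  rw [BAden, Aalpha_half, Abeta_half]
  simp only [zero_mul, zero_div, sinc_zero, dslope_same, Real.deriv_sinh, Real.cosh_zero]
  norm_num
  ring

theorem BAden_half_ne_zero (t x : ℝ) : BAden t x (1 / 2) ≠ 0 := by
  rw [BAden_half]
  exact div_ne_zero (neg_ne_zero.2 (by positivity)) four_ne_zero

theorem BP_eq (t x : ℝ) :
    BP t x = Complex.exp (I * t) * (1 + BAnum t (1 / 2) / BAden t x (1 / 2)) := by
  have hpos : (1 + 4 * t ^ 2 + 2 * x ^ 2 : ℂ) ≠ 0 := by
    exact_mod_cast (by positivity : (1 + 4 * t ^ 2 + 2 * x ^ 2 : ℝ) ≠ 0)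
  rw [BP, BAnum_half, BAden_half]
  push_cast
  field_simp
  ring

theorem akhmediev_to_peregrine_limit (t x : ℝ) :
    Filter.Tendsto (fun a : ℝ => BA a t x)
      (nhdsWithin (1/2) (Set.Iio (1/2))) (nhds (BP t x)) := by
  have hcont : ContinuousAt
      (fun a : ℝ => Complex.exp (I * t) * (1 + BAnum t a / BAden t x a)) (1 / 2) :=
    continuousAt_const.mul <| continuousAt_const.add <|
      (continuous_BAnum t).continuousAt.div
        (continuous_ofReal.comp (continuous_BAden t x)).continuousAt
        (ofReal_ne_zero.2 (BAden_half_ne_zero t x))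
  rw [BP_eq]
  refine (hcont.tendsto.mono_left nhdsWithin_le_nhds).congr' ?_
  filter_upwards [Ioo_mem_nhdsLT (by norm_num : (0 : ℝ) < 1 / 2)] with a ha
  exact (BA_eq t x ha.1.le ha.2).symm
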